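/- For every t with |t| < 1: (π/2)·E[|X_t|·|X|] = (π/2 − arccos t)·t + √(1 − t²). Consequently the derivative in t of (π/2)·E[|X_t|·|X|] equals π/2 − arccos t, and its second derivative in t equals 1/√(1 − t²). -/

import Mathlib

open MeasureTheory ProbabilityTheory Real Filter

noncomputable section

/-- The law of a pair of independent standard real Gaussians. -/
def gauss2 : Measure (ℝ × ℝ) := (gaussianReal 0 1).prod (gaussianReal 0 1)

/-- `g(t) = (π/2)·E[|X_t|·|X|]` where `X_t = t X + √(1−t²) Y` with `X, Y`
independent standard Gaussians. -/
def g12 (t : ℝ) : ℝ :=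
  (π / 2) * ∫ p : ℝ × ℝ, |t * p.1 + Real.sqrt (1 - t ^ 2) * p.2| * |p.1| ∂gauss2

end

/-!
In polar coordinates `(r, θ)` the law of `(X, Y)` has density `(2π)⁻¹ r e^{-r²/2}`, and with
`t = cos φ`, `φ = arccos t`, the integrand `|X_t| |X|` becomes `r² |cos (θ - φ)| |cos θ|`.
The radial factor is `∫ r³ e^{-r²/2} dr = 2`. The angular integrand has period `π`; over the
period `[φ - π/2, φ + π/2]` the factor `cos (θ - φ)` is nonnegative and `cos θ` changes sign only
at `π/2`, so the angular integral is elementary and equals `(π - 2φ) cos φ + 2 sin φ`.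
For the derivatives, the terms `± t / √(1 - t²)` coming from `arccos` and from `√(1 - t²)` cancel.
-/

lemma integral_Ioi_pow_three_mul_exp_neg_sq_div_two :
    ∫ r in Set.Ioi (0 : ℝ), r ^ 3 * exp (-r ^ 2 / 2) = 2 :=
  calc ∫ r in Set.Ioi (0 : ℝ), r ^ 3 * exp (-r ^ 2 / 2)
      = ∫ r in Set.Ioi (0 : ℝ), r ^ (3 : ℝ) * exp (-(1 / 2) * r ^ (2 : ℝ)) := by
        refine setIntegral_congr_fun measurableSet_Ioi fun r _ => ?_
        norm_cast
        ring_nf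
    _ = 2 := by
        rw [integral_rpow_mul_exp_neg_mul_rpow (by norm_num) (by norm_num) (by norm_num)]
        norm_num [Real.Gamma_two]

lemma gauss2_eq_withDensity :
    gauss2 = volume.withDensity fun p : ℝ × ℝ => gaussianPDF 0 1 p.1 * gaussianPDF 0 1 p.2 := by
  rw [gauss2, gaussianReal_of_var_ne_zero 0 one_ne_zero,
    prod_withDensity (measurable_gaussianPDF 0 1) (measurable_gaussianPDF 0 1),
    Measure.volume_eq_prod]

lemma integral_gauss2_eq_integral_density (F : ℝ × ℝ → ℝ) :
    ∫ p, F p ∂gauss2 = ∫ p : ℝ × ℝ, (2 * π)⁻¹ * exp (-(p.1 ^ 2 + p.2 ^ 2) / 2) * F p := by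
  rw [gauss2_eq_withDensity, integral_withDensity_eq_integral_toReal_smul
    (by fun_prop) (.of_forall fun _ => ENNReal.mul_lt_top gaussianPDF_lt_top gaussianPDF_lt_top)]
  congr 1 with p
  simp only [ENNReal.toReal_mul, toReal_gaussianPDF, gaussianPDFReal, NNReal.coe_one, mul_one,
    sub_zero, smul_eq_mul]
  rw [mul_mul_mul_comm, ← mul_inv, mul_self_sqrt (by positivity), ← exp_add]
  ring_nf

lemma integral_gauss2_eq_polar (F : ℝ × ℝ → ℝ) :
    ∫ p, F p ∂gauss2 = (2 * π)⁻¹ * ∫ p in Set.Ioi 0 ×ˢ Set.Ioo (-π) π,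
      p.1 * exp (-p.1 ^ 2 / 2) * F (p.1 * cos p.2, p.1 * sin p.2) := by
  rw [integral_gauss2_eq_integral_density, ← integral_comp_polarCoord_symm, polarCoord_target,
    ← integral_const_mul]
  refine setIntegral_congr_fun (measurableSet_Ioi.prod measurableSet_Ioo) fun p _ => ?_
  simp only [polarCoord_symm_apply, smul_eq_mul, mul_pow, ← mul_add, cos_sq_add_sin_sq, mul_one]
  ring

lemma integral_cos_sub_mul_cos (φ a b : ℝ) :
    ∫ θ in a..b, cos (θ - φ) * cos θ
      = (sin (2 * b - φ) - sin (2 * a - φ)) / 4 + (b - a) * cos φ / 2 := by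
  have hF : ∀ x, HasDerivAt (fun y => sin (2 * y - φ) / 4 + y * cos φ / 2)
      (cos (x - φ) * cos x) x := fun x => by
    refine ((((hasDerivAt_id' x).const_mul 2).sub_const φ).sin.div_const 4).fun_add
      (((hasDerivAt_id' x).mul_const (cos φ)).div_const 2) |>.congr_deriv ?_
    rw [cos_sub, cos_sub, cos_two_mul, sin_two_mul]
    ring
  rw [intervalIntegral.integral_eq_sub_of_hasDerivAt (fun x _ => hF x)
    (by apply Continuous.intervalIntegrable; fun_prop)]
  ring

lemma integral_abs_cos_sub_mul_abs_cos {φ : ℝ} (h0 : 0 ≤ φ) (hπ : φ ≤ π) :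
    ∫ θ in (-π)..π, |cos (θ - φ)| * |cos θ| = (π - 2 * φ) * cos φ + 2 * sin φ := by
  set h : ℝ → ℝ := fun θ => |cos (θ - φ)| * |cos θ|
  have hper : Function.Periodic h π := fun θ => by
    simp only [h, add_sub_right_comm, cos_add_pi, abs_neg]
  have hint : ∀ a b, IntervalIntegrable h volume a b := fun a b => by
    apply Continuous.intervalIntegrable; fun_prop
  have hpos : ∀ θ ∈ Set.uIcc (φ - π / 2) (π / 2), h θ = cos (θ - φ) * cos θ := by
    intro θ hθ
    rw [Set.uIcc_of_le (by linarith)] at hθ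
    obtain ⟨hθ1, hθ2⟩ := hθ
    simp only [h]
    rw [abs_of_nonneg (cos_nonneg_of_mem_Icc (x := θ - φ) ⟨by linarith, by linarith⟩),
      abs_of_nonneg (cos_nonneg_of_mem_Icc (x := θ) ⟨by linarith, hθ2⟩)]
  have hneg : ∀ θ ∈ Set.uIcc (π / 2) (φ + π / 2), h θ = -(cos (θ - φ) * cos θ) := by
    intro θ hθ
    rw [Set.uIcc_of_le (by linarith)] at hθ
    obtain ⟨hθ1, hθ2⟩ := hθ
    simp only [h]
    rw [abs_of_nonneg (cos_nonneg_of_mem_Icc (x := θ - φ) ⟨by linarith, by linarith⟩),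
      abs_of_nonpos (cos_nonpos_of_pi_div_two_le_of_le hθ1 (by linarith))]
    ring
  calc ∫ θ in (-π)..π, h θ = 2 * ∫ θ in (φ - π / 2)..(φ - π / 2 + π), h θ := by
        have h2 := hper.intervalIntegral_add_zsmul_eq 2 (-π) hint
        rw [hper.intervalIntegral_add_eq (-π) (φ - π / 2)] at h2
        convert h2 using 2 <;> simp; ring
    _ = 2 * ((∫ θ in (φ - π / 2)..(π / 2), cos (θ - φ) * cos θ)
          - ∫ θ in (π / 2)..(φ + π / 2), cos (θ - φ) * cos θ) := by
        rw [← intervalIntegral.integral_add_adjacent_intervals (b := π / 2) (hint _ _) (hint _ _),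
          intervalIntegral.integral_congr hpos, show φ - π / 2 + π = φ + π / 2 by ring,
          intervalIntegral.integral_congr hneg, intervalIntegral.integral_neg]
        ring
    _ = (π - 2 * φ) * cos φ + 2 * sin φ := by
        rw [integral_cos_sub_mul_cos, integral_cos_sub_mul_cos,
          show 2 * (π / 2) - φ = π - φ by ring, show 2 * (φ - π / 2) - φ = φ - π by ring,
          show 2 * (φ + π / 2) - φ = φ + π by ring, sin_pi_sub, sin_sub_pi, sin_add_pi]
        ring

lemma integral_abs_cos_mul_add_sin_mul_mul_abs_gauss2 {φ : ℝ} (h0 : 0 ≤ φ) (hπ : φ ≤ π) :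
    ∫ p, |cos φ * p.1 + sin φ * p.2| * |p.1| ∂gauss2
      = ((π - 2 * φ) * cos φ + 2 * sin φ) / π := by
  have hpolar : ∀ p ∈ Set.Ioi (0 : ℝ) ×ˢ Set.Ioo (-π) π,
      p.1 * exp (-p.1 ^ 2 / 2) * (|cos φ * (p.1 * cos p.2) + sin φ * (p.1 * sin p.2)|
        * |p.1 * cos p.2|)
      = p.1 ^ 3 * exp (-p.1 ^ 2 / 2) * (|cos (p.2 - φ)| * |cos p.2|) := by
    rintro ⟨r, θ⟩ ⟨hr, -⟩
    rw [cos_sub, show cos φ * (r * cos θ) + sin φ * (r * sin θ)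
      = r * (cos θ * cos φ + sin θ * sin φ) by ring, abs_mul, abs_mul, abs_of_pos hr]
    ring
  rw [integral_gauss2_eq_polar, setIntegral_congr_fun (measurableSet_Ioi.prod measurableSet_Ioo)
    hpolar, Measure.volume_eq_prod,
    setIntegral_prod_mul (fun r => r ^ 3 * exp (-r ^ 2 / 2)) fun θ => |cos (θ - φ)| * |cos θ|,
    integral_Ioi_pow_three_mul_exp_neg_sq_div_two,
    ← integral_Ioc_eq_integral_Ioo, ← intervalIntegral.integral_of_le (by linarith [pi_pos]),
    integral_abs_cos_sub_mul_abs_cos h0 hπ]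
  field_simp

lemma g12_eq {t : ℝ} (ht : |t| ≤ 1) :
    g12 t = (π / 2 - arccos t) * t + √(1 - t ^ 2) := by
  obtain ⟨h1, h2⟩ := abs_le.mp ht
  have h := integral_abs_cos_mul_add_sin_mul_mul_abs_gauss2 (arccos_nonneg t) (arccos_le_pi t)
  rw [cos_arccos h1 h2, sin_arccos] at h
  rw [g12, h]
  field_simp

lemma hasDerivAt_pi_div_two_sub_arccos {s : ℝ} (h1 : s ≠ -1) (h2 : s ≠ 1) :
    HasDerivAt (fun y => π / 2 - arccos y) (1 / √(1 - s ^ 2)) s := by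
  simpa using (hasDerivAt_arccos h1 h2).const_sub (π / 2)

lemma hasDerivAt_pi_div_two_sub_arccos_mul_add_sqrt {s : ℝ} (h1 : s ≠ -1) (h2 : s ≠ 1) :
    HasDerivAt (fun y => (π / 2 - arccos y) * y + √(1 - y ^ 2)) (π / 2 - arccos s) s := by
  have hsq : 1 - s ^ 2 ≠ 0 := by
    rw [sub_ne_zero, ne_comm, sq_ne_one_iff]
    exact ⟨h2, h1⟩
  refine ((hasDerivAt_pi_div_two_sub_arccos h1 h2).mul (hasDerivAt_id' s)).add
    (((hasDerivAt_pow 2 s).const_sub 1).sqrt hsq) |>.congr_deriv ?_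
  ring

lemma deriv_g12 {s : ℝ} (hs : |s| < 1) : deriv g12 s = π / 2 - arccos s := by
  obtain ⟨h1, h2⟩ := abs_lt.mp hs
  have hg : g12 =ᶠ[nhds s] fun y => (π / 2 - arccos y) * y + √(1 - y ^ 2) :=
    (continuous_abs.continuousAt.eventually_lt continuousAt_const hs).mono fun _ hy => g12_eq hy.le
  rw [hg.deriv_eq, (hasDerivAt_pi_div_two_sub_arccos_mul_add_sqrt h1.ne' h2.ne).deriv]

/-- explicit formula `(π/2)·E[|X_t||X|] = (π/2 − arccos t)·t + √(1−t²)`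
together with its first and second derivatives in `t`. -/
theorem expected_abs_product_formula (t : ℝ) (ht : |t| < 1) :
    g12 t = (π / 2 - Real.arccos t) * t + Real.sqrt (1 - t ^ 2) ∧
    deriv g12 t = π / 2 - Real.arccos t ∧
    deriv (deriv g12) t = 1 / Real.sqrt (1 - t ^ 2) := by
  obtain ⟨h1, h2⟩ := abs_lt.mp ht
  have hdg : deriv g12 =ᶠ[nhds t] fun s => π / 2 - arccos s :=
    (continuous_abs.continuousAt.eventually_lt continuousAt_const ht).mono fun s hs => deriv_g12 hs
  refine ⟨g12_eq ht.le, deriv_g12 ht, ?_⟩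
  rw [hdg.deriv_eq, (hasDerivAt_pi_div_two_sub_arccos h1.ne' h2.ne).deriv]
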